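/- arXiv:0901.4450 — 4 statements merged into one kernel-verified Lean document; each statement's English description precedes it below -/
import Mathlib

section
/- Let e = 0 and let λ, μ be l-multipartitions with the same total content. If μ ≤ λ in the order defined by cont₁(μ)+⋯+cont_m(μ) ≤ cont₁(λ)+⋯+cont_m(λ) (dominance order on Q₊) for all m = 1,…,l with equality at m = l, then μ ⊴ λ in the dominance ordering on multipartitions. -/
open scoped Classical

/-- An `l`-multipartition, encoded as a function assigning to each component
`m < l` and each row index `a` the length of that row. -/
abbrev MP (l : ℕ) := Fin l → ℕ → ℕ

/-- `lam` really is a multipartition. -/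
def IsMP {l : ℕ} (lam : MP l) : Prop :=
  (∀ m, Antitone (lam m)) ∧ ∃ N, ∀ m a, N ≤ a → lam m a = 0

/-- The size `|λ^{(m)}|` of the `m`-th component. -/
noncomputable def compSize {l : ℕ} (lam : MP l) (m : Fin l) : ℕ := ∑ᶠ a, lam m a

/-- `cont₁(λ) + ⋯ + cont_m(λ)` evaluated at the coefficient of `α_i` (`e = 0`, so
residues are the integers `k̃_c + b − a`): the number of nodes of residue `i` lying
in the first `m` components of `λ`. -/
noncomputable def contUpTo {l : ℕ} (k : Fin l → ℤ) (lam : MP l) (m : ℕ) (i : ℤ) : ℕ :=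
  Set.ncard {x : Fin l × ℕ × ℕ |
    (x.1 : ℕ) < m ∧ x.2.2 < lam x.1 x.2.1 ∧ k x.1 + x.2.2 - x.2.1 = i}

/-- The partial sums `Σ_{c<m} |λ^{(c)}| + Σ_{b ≤ c} λ^{(m)}_b` occurring in the
dominance order on multipartitions. -/
noncomputable def domSum {l : ℕ} (lam : MP l) (m : Fin l) (c : ℕ) : ℕ :=
  (∑ᶠ m' ∈ {m' : Fin l | m' < m}, compSize lam m') + ∑ b ∈ Finset.range (c + 1), lam m b

/-!
With charge `k₀`, the nodes of residue `i` of a partition lie on the diagonal `b - a = i - k₀`.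
Because row lengths weakly decrease, the rows meeting this diagonal form an interval that starts
at row `(k₀ - i)⁺`. So the number of residue-`i` nodes of `λ^{(m)}` in rows `0, …, c` is
`min (d, c + 1 - (k₀ - i)⁺)`, where `d` is the number of residue-`i` nodes of `λ^{(m)}`. Summing
over `i`,
  `domSum λ m c = ∑ i, min (C_{m+1}(i), C_m(i) + (c + 1 - (k̃_m - i)⁺))`,
where `C_m = cont₁ + ⋯ + cont_m`. The right side is monotone in the `C`'s, which gives
dominance. Summing `C_l` over all residues gives the total size.
-/

open Finset Filter

def residue (k₀ : ℤ) (p : ℕ × ℕ) : ℤ := k₀ + p.2 - p.1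

def boxNodes (B : ℕ) (g : ℕ → ℕ) : Finset (ℕ × ℕ) :=
  (range B ×ˢ range B).filter fun p => p.2 < g p.1

def resNodes (B : ℕ) (k₀ : ℤ) (g : ℕ → ℕ) (i : ℤ) : Finset (ℕ × ℕ) :=
  (boxNodes B g).filter fun p => residue k₀ p = i

lemma Finset.card_filter_product {α β : Type*} (s : Finset α) (t : Finset β)
    (p : α × β → Prop) [DecidablePred p] :
    #((s ×ˢ t).filter p) = ∑ a ∈ s, #(t.filter fun b => p (a, b)) := by
  simp only [card_filter, sum_product]

lemma Finset.eq_Ico_of_downClosed {A : Finset ℕ} {a₀ : ℕ} (hlow : ∀ a ∈ A, a₀ ≤ a)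
    (hdown : ∀ a ∈ A, ∀ a', a₀ ≤ a' → a' ≤ a → a' ∈ A) :
    A = Ico a₀ (a₀ + #A) := by
  rcases A.eq_empty_or_nonempty with rfl | hne
  · simp
  have hIcc : A = Icc a₀ (A.max' hne) := by
    ext a
    rw [mem_Icc]
    exact ⟨fun ha => ⟨hlow a ha, A.le_max' a ha⟩,
      fun ⟨h₁, h₂⟩ => hdown _ (A.max'_mem hne) a h₁ h₂⟩
  have := hlow _ (A.max'_mem hne)
  rw [hIcc, Nat.card_Icc, ← Ico_add_one_right_eq_Icc]
  congr 1
  omega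

section Partition

variable {B : ℕ} {k₀ : ℤ} {g : ℕ → ℕ}

@[simp]
lemma mem_boxNodes {p : ℕ × ℕ} : p ∈ boxNodes B g ↔ (p.1 < B ∧ p.2 < B) ∧ p.2 < g p.1 := by
  simp [boxNodes]

@[simp]
lemma mem_resNodes {p : ℕ × ℕ} {i : ℤ} :
    p ∈ resNodes B k₀ g i ↔ ((p.1 < B ∧ p.2 < B) ∧ p.2 < g p.1) ∧ residue k₀ p = i := by
  simp [resNodes]

lemma card_boxNodes_filter_fst_mem (hgB : ∀ a, g a ≤ B) (hg0 : ∀ a, B ≤ a → g a = 0)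
    (s : Finset ℕ) : #((boxNodes B g).filter fun p => p.1 ∈ s) = ∑ a ∈ s, g a := by
  calc #((boxNodes B g).filter fun p => p.1 ∈ s)
      = ∑ a ∈ range B, if a ∈ s then g a else 0 := by
        rw [boxNodes, filter_filter, card_filter_product]
        refine sum_congr rfl fun a _ => ?_
        split_ifs with ha
        · simp only [ha, and_true]
          rw [← card_range (g a)]
          congr 1
          ext b
          simpa using fun hb => hb.trans_le (hgB a)
        · simp [ha]
    _ = ∑ a ∈ s, g a := by
        rw [sum_ite_mem]
        refine sum_subset inter_subset_right fun a has hna => hg0 a ?_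
        simpa [has] using hna

lemma card_resNodes_filter_fst_mem_range (hg : Antitone g) (c : ℕ) (i : ℤ) :
    #((resNodes B k₀ g i).filter fun p => p.1 ∈ range (c + 1)) =
      min #(resNodes B k₀ g i) (c + 1 - (k₀ - i).toNat) := by
  set S := resNodes B k₀ g i
  have hinj : Set.InjOn Prod.fst (S : Set (ℕ × ℕ)) := by
    rintro ⟨a, b⟩ hp ⟨a', b'⟩ hq (rfl : a = a')
    simp only [S, mem_coe, mem_resNodes, residue] at hp hq
    exact Prod.ext rfl (by omega)
  have hrows : S.image Prod.fst = Ico (k₀ - i).toNat ((k₀ - i).toNat + #S) := by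
    rw [← card_image_of_injOn hinj]
    apply Finset.eq_Ico_of_downClosed
    · simp only [mem_image, S, mem_resNodes, residue]
      omega
    · intro a ha a' h₁ h₂
      obtain ⟨p, hp, rfl⟩ := mem_image.1 ha
      refine mem_image.2 ⟨(a', p.2 + a' - p.1), ?_, rfl⟩
      simp only [S, mem_resNodes, residue] at hp ⊢
      have := hg h₂
      omega
  calc #(S.filter fun p => p.1 ∈ range (c + 1))
      = #((S.image Prod.fst).filter (· ∈ range (c + 1))) := by
        rw [filter_image, card_image_of_injOn (hinj.mono (coe_subset.2 (filter_subset _ _)))]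
    _ = min #S (c + 1 - (k₀ - i).toNat) := by
        have : (Ico (k₀ - i).toNat ((k₀ - i).toNat + #S)).filter (· ∈ range (c + 1)) =
            Ico (k₀ - i).toNat (min ((k₀ - i).toNat + #S) (c + 1)) := by
          ext a
          simp only [mem_filter, mem_Ico, mem_range]
          omega
        rw [hrows, this, Nat.card_Ico]
        omega

end Partition

section Multipartition

variable {l : ℕ} (k : Fin l → ℤ) {f : MP l} {B : ℕ}

/-- All nodes of `f` lie in the box `[0, B)²`; this turns every node count into the cardinality
of a finset of `ℕ × ℕ`, and sums over residues into sums over the finset `residues k B`. -/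
def FitsInBox (f : MP l) (B : ℕ) : Prop :=
  ∀ m a, f m a ≤ B ∧ (B ≤ a → f m a = 0)

lemma IsMP.eventually_fitsInBox (hf : IsMP f) : ∀ᶠ B in atTop, FitsInBox f B := by
  obtain ⟨hanti, N, hN⟩ := hf
  refine eventually_atTop.2
    ⟨N + ∑ m, f m 0, fun B hB m a => ⟨?_, fun ha => hN m a (by omega)⟩⟩
  calc f m a ≤ f m 0 := hanti m (Nat.zero_le a)
    _ ≤ ∑ m, f m 0 := single_le_sum (f := fun m => f m 0) (fun _ _ => Nat.zero_le _) (mem_univ m)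
    _ ≤ B := by omega

def residues (k : Fin l → ℤ) (B : ℕ) : Finset ℤ :=
  (univ ×ˢ (range B ×ˢ range B)).image fun x => residue (k x.1) x.2

lemma mapsTo_residue_boxNodes (m : Fin l) (g : ℕ → ℕ) :
    Set.MapsTo (residue (k m)) (boxNodes B g) (residues k B) := fun p hp =>
  mem_image.2 ⟨(m, p), by simpa using (mem_boxNodes.1 hp).1, rfl⟩

lemma compSize_eq_card_boxNodes (hf : FitsInBox f B) (m : Fin l) :
    compSize f m = #(boxNodes B (f m)) := by
  have hrows : (boxNodes B (f m)).filter (fun p => p.1 ∈ range B) = boxNodes B (f m) :=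
    filter_true_of_mem fun p hp => mem_range.2 (mem_boxNodes.1 hp).1.1
  rw [← hrows, card_boxNodes_filter_fst_mem (fun a => (hf m a).1) (fun a => (hf m a).2),
    compSize]
  refine finsum_eq_sum_of_support_subset _ fun a ha => ?_
  simpa using fun h => ha ((hf m a).2 h)

lemma contUpTo_eq_sum (hf : FitsInBox f B) (m : ℕ) (i : ℤ) :
    contUpTo k f m i =
      ∑ m' ∈ univ.filter (fun m' : Fin l => (m' : ℕ) < m), #(resNodes B (k m') (f m') i) := by
  have hset : {x : Fin l × ℕ × ℕ |
      (x.1 : ℕ) < m ∧ x.2.2 < f x.1 x.2.1 ∧ k x.1 + x.2.2 - x.2.1 = i} =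
      ↑(((univ : Finset (Fin l)) ×ˢ (range B ×ˢ range B)).filter fun x =>
        (x.1 : ℕ) < m ∧ x.2.2 < f x.1 x.2.1 ∧ k x.1 + x.2.2 - x.2.1 = i) := by
    ext ⟨m', a, b⟩
    simp only [Set.mem_ofPred_eq, coe_filter, mem_product, mem_univ, mem_range, true_and]
    refine ⟨fun h => ⟨⟨?_, h.2.1.trans_le (hf m' a).1⟩, h⟩, fun h => h.2⟩
    by_contra ha
    have := (hf m' a).2 (not_lt.1 ha)
    omega
  rw [contUpTo, hset, Set.ncard_coe_finset, card_filter_product, sum_filter]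
  refine sum_congr rfl fun m' _ => ?_
  split_ifs with h
  · simp only [h, true_and]
    rw [resNodes, boxNodes, filter_filter]
    rfl
  · simp [h]

lemma contUpTo_succ (hf : FitsInBox f B) (m : Fin l) (i : ℤ) :
    contUpTo k f (m + 1) i = contUpTo k f m i + #(resNodes B (k m) (f m) i) := by
  have hinsert : univ.filter (fun m' : Fin l => (m' : ℕ) < m + 1) =
      insert m (univ.filter fun m' : Fin l => (m' : ℕ) < m) := by
    ext m'
    simp only [mem_filter, mem_univ, true_and, mem_insert, Fin.ext_iff]
    omega
  rw [contUpTo_eq_sum k hf, contUpTo_eq_sum k hf, hinsert, sum_insert (by simp), add_comm]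

lemma sum_contUpTo (hf : FitsInBox f B) (m : ℕ) :
    ∑ i ∈ residues k B, contUpTo k f m i =
      ∑ m' ∈ univ.filter (fun m' : Fin l => (m' : ℕ) < m), compSize f m' := by
  simp_rw [contUpTo_eq_sum k hf, compSize_eq_card_boxNodes hf]
  rw [sum_comm]
  exact sum_congr rfl fun m' _ =>
    (card_eq_sum_card_fiberwise (mapsTo_residue_boxNodes k m' _)).symm

lemma domSum_eq_sum_min (hanti : ∀ m, Antitone (f m)) (hf : FitsInBox f B) (m : Fin l)
    (c : ℕ) :
    domSum f m c = ∑ i ∈ residues k B,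
      min (contUpTo k f (m + 1) i) (contUpTo k f m i + (c + 1 - (k m - i).toNat)) := by
  set rows := fun p : ℕ × ℕ => p.1 ∈ range (c + 1)
  have hmin : ∀ i, min (contUpTo k f (m + 1) i) (contUpTo k f m i + (c + 1 - (k m - i).toNat)) =
      contUpTo k f m i + #((resNodes B (k m) (f m) i).filter rows) := fun i => by
    rw [contUpTo_succ k hf, card_resNodes_filter_fst_mem_range (hanti m), Nat.add_min_add_left]
  have hrows : ∑ i ∈ residues k B, #((resNodes B (k m) (f m) i).filter rows) =
      #((boxNodes B (f m)).filter rows) := by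
    rw [card_eq_sum_card_fiberwise ((mapsTo_residue_boxNodes k m _).mono_left
      (coe_subset.2 (filter_subset _ _)))]
    exact sum_congr rfl fun i _ => by rw [resNodes, filter_comm]
  have hprev : {m' : Fin l | m' < m} = ↑(univ.filter fun m' : Fin l => (m' : ℕ) < m) := by
    ext
    simp
  rw [sum_congr rfl fun i _ => hmin i, sum_add_distrib, sum_contUpTo k hf, hrows,
    card_boxNodes_filter_fst_mem (fun a => (hf m a).1) (fun a => (hf m a).2), domSum, hprev,
    finsum_mem_coe_finset]

lemma finsum_compSize_eq_sum_contUpTo (hf : FitsInBox f B) :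
    ∑ᶠ m, compSize f m = ∑ i ∈ residues k B, contUpTo k f l i := by
  rw [sum_contUpTo k hf, finsum_eq_sum_of_fintype, filter_true_of_mem fun m _ => m.isLt]

end Multipartition

/-- let `e = 0` and let `λ, μ` be `l`-multipartitions with the same
total content.  If `μ ≤ λ` in the order defined by
`cont₁(μ)+⋯+cont_m(μ) ≤ cont₁(λ)+⋯+cont_m(λ)` (dominance on `Q₊`, i.e. pointwise)
for all `m = 1,…,l`, with equality at `m = l`, then `μ ⊴ λ` in the dominance order
on multipartitions. -/
theorem content_order_implies_dominance
    (l : ℕ) (k : Fin l → ℤ) (lam mu : MP l)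
    (hlam : IsMP lam) (hmu : IsMP mu)
    (hle : ∀ m : ℕ, m ≤ l → ∀ i : ℤ, contUpTo k mu m i ≤ contUpTo k lam m i)
    (heq : ∀ i : ℤ, contUpTo k mu l i = contUpTo k lam l i) :
    (∀ (m : Fin l) (c : ℕ), domSum mu m c ≤ domSum lam m c)
      ∧ (∑ᶠ m' : Fin l, compSize mu m') = ∑ᶠ m' : Fin l, compSize lam m' := by
  obtain ⟨B, hlamB, hmuB⟩ := (hlam.eventually_fitsInBox.and hmu.eventually_fitsInBox).exists
  refine ⟨fun m c => ?_, ?_⟩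
  · rw [domSum_eq_sum_min k hmu.1 hmuB, domSum_eq_sum_min k hlam.1 hlamB]
    gcongr with i
    exacts [hle _ m.isLt i, hle _ m.isLt.le i]
  · rw [finsum_compSize_eq_sum_contUpTo k hmuB, finsum_compSize_eq_sum_contUpTo k hlamB]
    exact sum_congr rfl fun i _ => heq i
end

section
/- Let e > 0 and suppose the multicharge satisfies k̃_m − k̃_{m+1} ≥ ht(α) + e for m = 1,…,l−1. Then for all l-multipartitions λ, μ of content α, μ > λ in Uglov's order (defined via dominance of the associated partitions under the inverse (l,e)-quotient map) implies μ <_lex λ in the lexicographic order on multipartitions. -/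
open scoped Classical

/-- The total number of nodes `|λ|`. -/
noncomputable def totalSize {l : ℕ} (lam : MP l) : ℕ := ∑ᶠ m, ∑ᶠ a, lam m a

/-- The number of nodes of `λ` of residue `i ∈ ℤ/eℤ` (node `(m,a,b)` has residue
`k̃_m + b − a`). -/
noncomputable def resCont (e : ℕ) {l : ℕ} (k : Fin l → ℤ) (lam : MP l) (i : ZMod e) : ℕ :=
  Set.ncard {x : Fin l × ℕ × ℕ |
    x.2.2 < lam x.1 x.2.1 ∧ ((k x.1 + x.2.2 - x.2.1 : ℤ) : ZMod e) = i}

/-- Uglov's reindexing of the abacus: the position in row `m` (0-indexed) and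
column `n ∈ ℤ` is reindexed by the integer `e·l·s + e·m + t`, where `n = e·s + t`
with `1 ≤ t ≤ e`. -/
def uglovIdx (e l : ℕ) (m : Fin l) (n : ℤ) : ℤ :=
  (e : ℤ) * l * ((n - 1) / (e : ℤ)) + (e : ℤ) * m.1 + ((n - 1) % (e : ℤ)) + 1

/-- The set of Uglov indices of the beads of the abacus display `A(λ)`: the bead
positions in row `m` are the columns `k̃_m + λ^{(m)}_a − a` for `a = 0, 1, 2, …`
(0-indexed rows). -/
def beads (e l : ℕ) (k : Fin l → ℤ) (lam : MP l) : Set ℤ :=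
  {u | ∃ (m : Fin l) (a : ℕ), u = uglovIdx e l m (k m + lam m a - a)}

/-- `lbar` is the partition `λ̄` associated to `λ` by the inverse of Uglov's
`(l,e)`-quotient map: the beads of `A(λ)` occupy exactly the positions indexed by
the beta-numbers `k̃₁ + ⋯ + k̃_l + λ̄_b − b` for `b = 0, 1, 2, …`. -/
def IsUglovBar (e l : ℕ) (k : Fin l → ℤ) (lam : MP l) (lbar : ℕ → ℕ) : Prop :=
  Antitone lbar ∧ (∃ N, ∀ b, N ≤ b → lbar b = 0) ∧
    beads e l k lam = Set.range fun b : ℕ => (∑ m, k m) + lbar b - b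

/-- The dominance order `μ̄ ⊴ λ̄` on partitions (encoded as eventually-zero
antitone functions `ℕ → ℕ`). -/
def PtnDom (mbar lbar : ℕ → ℕ) : Prop :=
  (∀ c : ℕ, ∑ b ∈ Finset.range (c + 1), mbar b ≤ ∑ b ∈ Finset.range (c + 1), lbar b)
    ∧ (∑ᶠ b, mbar b) = ∑ᶠ b, lbar b

/-- The lexicographic order on partitions: `f <_lex g`. -/
def PtnLexLt (f g : ℕ → ℕ) : Prop :=
  ∃ a : ℕ, (∀ b < a, f b = g b) ∧ f a < g a

/-- The lexicographic order on `l`-multipartitions: `μ <_lex λ`. -/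
def MPLexLt {l : ℕ} (mu lam : MP l) : Prop :=
  ∃ m : Fin l, (∀ m' < m, mu m' = lam m') ∧ PtnLexLt (mu m) (lam m)

/-! Suppose instead `λ <_lex μ`, first differing in row `a₀` of component `m₀`, and let `x`
be the Uglov index of the bead of `μ` for that row. Then `x` is not a bead of `λ`, while
every bead of `λ` beyond `x` is a bead of `μ`: earlier components and earlier rows of
component `m₀` agree, later rows of component `m₀` lie before `x`, and the gap
`k̃_m − k̃_{m'} ≥ |λ| + e` pushes every bead of a later component at least `e` columns to
the left of `x`, hence into an earlier block of Uglov indices. Since the beads are the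
beta-numbers of `λ̄` and `μ̄`, this forces `λ̄ <_lex μ̄`, and dominance refines the
lexicographic order, contradicting `μ̄ ⊴ λ̄`. -/

section UglovIdx

variable {e l : ℕ}

lemma uglovIdx_sub_one (m : Fin l) (n : ℤ) :
    uglovIdx e l m n - 1 = e * (l * ((n - 1) / e) + m) + (n - 1) % e := by
  unfold uglovIdx
  ring

lemma uglovIdx_sub_one_ediv (he : 0 < e) (m : Fin l) (n : ℤ) :
    (uglovIdx e l m n - 1) / e = l * ((n - 1) / e) + m := by
  have he' : (0 : ℤ) < e := by exact_mod_cast he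
  rw [uglovIdx_sub_one, add_comm, Int.add_mul_ediv_left _ _ he'.ne',
    Int.ediv_eq_zero_of_lt (Int.emod_nonneg _ he'.ne') (Int.emod_lt_of_pos _ he'), zero_add]

lemma uglovIdx_sub_one_emod (m : Fin l) (n : ℤ) :
    (uglovIdx e l m n - 1) % e = (n - 1) % e := by
  rw [uglovIdx_sub_one, add_comm, Int.add_mul_emod_self_left, Int.emod_emod]

lemma uglovIdx_block (he : 0 < e) (m : Fin l) (n : ℤ) :
    (uglovIdx e l m n - 1) / e / l = (n - 1) / e := by
  have hl : (0 : ℤ) < l := by exact_mod_cast m.pos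
  rw [uglovIdx_sub_one_ediv he, add_comm, Int.add_mul_ediv_left _ _ hl.ne',
    Int.ediv_eq_zero_of_lt (by positivity) (by exact_mod_cast m.2), zero_add]

lemma uglovIdx_row (he : 0 < e) (m : Fin l) (n : ℤ) :
    (uglovIdx e l m n - 1) / e % l = m := by
  rw [uglovIdx_sub_one_ediv he, add_comm, Int.add_mul_emod_self_left,
    Int.emod_eq_of_lt (by positivity) (by exact_mod_cast m.2)]

lemma uglovIdx_inj (he : 0 < e) {m m' : Fin l} {n n' : ℤ} :
    uglovIdx e l m n = uglovIdx e l m' n' ↔ m = m' ∧ n = n' := by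
  refine ⟨fun h => ?_, by rintro ⟨rfl, rfl⟩; rfl⟩
  have hrow : (m : ℤ) = m' := by rw [← uglovIdx_row he m n, ← uglovIdx_row he m' n', h]
  have hblock : (n - 1) / e = (n' - 1) / e := by
    rw [← uglovIdx_block he m n, ← uglovIdx_block he m' n', h]
  have hmod : (n - 1) % e = (n' - 1) % e := by
    rw [← uglovIdx_sub_one_emod m n, ← uglovIdx_sub_one_emod m' n', h]
  refine ⟨Fin.ext (by exact_mod_cast hrow), ?_⟩
  have hn := Int.mul_ediv_add_emod (n - 1) e
  rw [hblock, hmod] at hn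
  linarith [Int.mul_ediv_add_emod (n' - 1) e]

lemma uglovIdx_strictMono (he : 0 < e) (m : Fin l) : StrictMono (uglovIdx e l m) := by
  intro n n' hn
  have he' : (0 : ℤ) < e := by exact_mod_cast he
  have hl : (0 : ℤ) ≤ e * (l - 1) := mul_nonneg he'.le (by have := m.pos; omega)
  have hblock : (n - 1) / e ≤ (n' - 1) / e := Int.ediv_le_ediv he' (by omega)
  have := Int.mul_ediv_add_emod (n - 1) e
  have := Int.mul_ediv_add_emod (n' - 1) e
  unfold uglovIdx
  nlinarith [mul_le_mul_of_nonneg_left hblock hl]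

/-- Uglov indices are ordered first by the block `(n - 1) / e` of the column `n`. -/
lemma lt_add_of_uglovIdx_lt (he : 0 < e) {m m' : Fin l} {n n' : ℤ}
    (h : uglovIdx e l m n < uglovIdx e l m' n') : n < n' + e := by
  have he' : (0 : ℤ) < e := by exact_mod_cast he
  have hl : (0 : ℤ) < l := by exact_mod_cast m.pos
  have hblock : (n - 1) / e ≤ (n' - 1) / e := by
    rw [← uglovIdx_block he m n, ← uglovIdx_block he m' n']
    exact Int.ediv_le_ediv hl (Int.ediv_le_ediv he' (by omega))
  have := Int.mul_ediv_add_emod (n - 1) e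
  have := Int.mul_ediv_add_emod (n' - 1) e
  have := Int.emod_lt_of_pos (n - 1) he'
  have := Int.emod_nonneg (n' - 1) he'.ne'
  nlinarith

end UglovIdx

section BetaNumbers

def betaNums (K : ℤ) (p : ℕ → ℕ) (b : ℕ) : ℤ := K + p b - b

variable {K : ℤ} {p q : ℕ → ℕ}

lemma betaNums_strictAnti (hp : Antitone p) : StrictAnti (betaNums K p) := by
  intro a b hab
  have := hp hab.le
  unfold betaNums
  omega

lemma ptnLexLt_of_betaNums_lt (h : toLex (betaNums K p) < toLex (betaNums K q)) :
    PtnLexLt p q := by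
  obtain ⟨a, heq, hlt⟩ : ∃ a, (∀ b < a, betaNums K p b = betaNums K q b) ∧
      betaNums K p a < betaNums K q a := h
  refine ⟨a, fun b hb => ?_, ?_⟩
  · have := heq b hb
    unfold betaNums at this
    omega
  · unfold betaNums at hlt
    omega

lemma lt_of_mem_range_of_notMem_range {f g : ℕ → ℤ} (hf : StrictAnti f) (hg : StrictAnti g)
    {x : ℤ} (hxg : x ∈ Set.range g) (hxf : x ∉ Set.range f)
    (habove : ∀ b, x < f b → f b ∈ Set.range g) : toLex f < toLex g := by
  have hne : toLex f ≠ toLex g := by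
    rintro hfg
    exact hxf (toLex.injective hfg ▸ hxg)
  refine (lt_or_gt_of_ne hne).resolve_right ?_
  intro hgf
  obtain ⟨b, heq, hlt⟩ : ∃ b, (∀ i < b, g i = f i) ∧ g b < f b := hgf
  obtain ⟨j, rfl⟩ := hxg
  rcases lt_or_ge (g j) (f b) with hjb | hbj
  · obtain ⟨i, hi⟩ := habove b hjb
    rcases lt_or_ge i b with hib | hib
    · have := hf hib
      have := heq i hib
      omega
    · have := hg.antitone hib
      omega
  · rcases lt_or_ge j b with hjb | hjb
    · exact hxf ⟨j, (heq j hjb).symm⟩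
    · have := hg.antitone hjb
      omega

lemma lt_of_betaNums_lt (hp : Antitone p) {a₀ a : ℕ} (hlt : p a₀ < q a₀)
    (h : betaNums K q a₀ < betaNums K p a) : a < a₀ := by
  by_contra! ha
  have := hp ha
  unfold betaNums at h
  omega

lemma betaNums_ne (hp : Antitone p) (hq : Antitone q) {a₀ : ℕ} (heq : ∀ b < a₀, p b = q b)
    (hlt : p a₀ < q a₀) (a : ℕ) : betaNums K p a ≠ betaNums K q a₀ := by
  intro h
  rcases lt_or_ge a a₀ with ha | ha
  · have := (betaNums_strictAnti (K := K) hq) ha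
    rw [← h, betaNums, betaNums, heq a ha] at this
    exact lt_irrefl _ this
  · have := hp ha
    unfold betaNums at h
    omega

end BetaNumbers

lemma le_sub_of_le_sub_succ {l : ℕ} {k : Fin l → ℤ} {C : ℤ} (hC : 0 ≤ C)
    (hgap : ∀ (m : ℕ) (h : m + 1 < l), C ≤ k ⟨m, Nat.lt_of_succ_lt h⟩ - k ⟨m + 1, h⟩)
    {m m' : Fin l} (h : m < m') : C ≤ k m - k m' := by
  obtain ⟨j, hj⟩ := m'
  induction j with
  | zero => exact absurd h (Nat.not_lt_zero _)
  | succ j ih =>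
    rcases Nat.lt_succ_iff_lt_or_eq.mp h with hlt | rfl
    · linarith [ih (Nat.lt_of_succ_lt hj) hlt, hgap j hj]
    · exact hgap m hj

section Multipartition

variable {l : ℕ} {lam : MP l}

lemma IsMP.finsum_eq_sum_range (hlam : IsMP lam) :
    ∃ N, ∀ m, ∀ M ≥ N, ∑ᶠ a, lam m a = ∑ a ∈ Finset.range M, lam m a := by
  obtain ⟨N, hN⟩ := hlam.2
  refine ⟨N, fun m M hM => finsum_eq_sum_of_support_subset _ fun a ha => ?_⟩
  by_contra hout
  simp only [Finset.coe_range, Set.mem_Iio, not_lt] at hout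
  exact ha (hN m a (hM.trans hout))

/-- The first row of one component and the number of rows of another are disjoint parts
of `|λ|`. -/
lemma IsMP.row_zero_add_le_totalSize (hlam : IsMP lam) {m m' : Fin l} (hne : m ≠ m')
    {a₀ : ℕ} (hpos : ∀ a < a₀, 0 < lam m a) : lam m' 0 + a₀ ≤ totalSize lam := by
  obtain ⟨N, hN⟩ := hlam.finsum_eq_sum_range
  set M := max N (a₀ + 1)
  have hpair : ∑ᶠ a, lam m a + ∑ᶠ a, lam m' a ≤ totalSize lam := by
    rw [totalSize, finsum_eq_sum_of_fintype (α := Fin l)]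
    exact Finset.add_le_sum (f := fun m => ∑ᶠ a, lam m a) (fun _ _ => Nat.zero_le _)
      (Finset.mem_univ _) (Finset.mem_univ _) hne
  have hrows : a₀ ≤ ∑ᶠ a, lam m a :=
    calc a₀ = ∑ _a ∈ Finset.range a₀, 1 := by simp
      _ ≤ ∑ a ∈ Finset.range a₀, lam m a :=
        Finset.sum_le_sum fun a ha => hpos a (Finset.mem_range.mp ha)
      _ ≤ ∑ a ∈ Finset.range M, lam m a :=
        Finset.sum_le_sum_of_subset (Finset.range_subset_range.mpr (by omega))
      _ = ∑ᶠ a, lam m a := (hN m M (le_max_left _ _)).symm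
  have hrow_zero : lam m' 0 ≤ ∑ᶠ a, lam m' a := by
    rw [hN m' M (le_max_left _ _)]
    exact Finset.single_le_sum (fun _ _ => Nat.zero_le _) (Finset.mem_range.mpr (by omega))
  omega

end Multipartition

lemma PtnDom.not_ptnLexLt {f g : ℕ → ℕ} (hdom : PtnDom f g) : ¬ PtnLexLt g f := by
  rintro ⟨a, heq, hlt⟩
  have hprefix : ∑ b ∈ Finset.range a, g b = ∑ b ∈ Finset.range a, f b :=
    Finset.sum_congr rfl fun b hb => heq b (Finset.mem_range.mp hb)
  have := hdom.1 a
  rw [Finset.sum_range_succ, Finset.sum_range_succ, hprefix] at this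
  omega

/-- `MPLexLt` is the strict order of the linear order `Lex (Fin l → Lex (ℕ → ℕ))`. -/
lemma mpLexLt_or_mpLexLt_of_ne {l : ℕ} {lam mu : MP l} (h : mu ≠ lam) :
    MPLexLt mu lam ∨ MPLexLt lam mu :=
  lt_or_gt_of_ne (α := Lex (Fin l → Lex (ℕ → ℕ))) (a := toLex fun m => toLex (mu m))
    (b := toLex fun m => toLex (lam m)) fun hmu => h (funext fun m => congrFun hmu m)

section Abacus

variable {e l : ℕ} {k : Fin l → ℤ} {lam mu : MP l} {m₀ : Fin l} {a₀ : ℕ}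

lemma uglovIdx_notMem_beads (he : 0 < e) (hlam : Antitone (lam m₀)) (hmu : Antitone (mu m₀))
    (hcols : ∀ b < a₀, lam m₀ b = mu m₀ b) (hlt : lam m₀ a₀ < mu m₀ a₀) :
    uglovIdx e l m₀ (betaNums (k m₀) (mu m₀) a₀) ∉ beads e l k lam := by
  rintro ⟨m, a, h⟩
  obtain ⟨rfl, hn⟩ := (uglovIdx_inj he).mp h
  exact betaNums_ne hlam hmu hcols hlt a hn.symm

lemma mem_beads_of_uglovIdx_lt (he : 0 < e) (hlam : IsMP lam) (hmu : Antitone (mu m₀))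
    (hgap : ∀ (m : ℕ) (h : m + 1 < l),
      (totalSize lam : ℤ) + e ≤ k ⟨m, Nat.lt_of_succ_lt h⟩ - k ⟨m + 1, h⟩)
    (hrows : ∀ m < m₀, lam m = mu m) (hcols : ∀ b < a₀, lam m₀ b = mu m₀ b)
    (hlt : lam m₀ a₀ < mu m₀ a₀) {y : ℤ} (hy : y ∈ beads e l k lam)
    (hxy : uglovIdx e l m₀ (betaNums (k m₀) (mu m₀) a₀) < y) : y ∈ beads e l k mu := by
  obtain ⟨m, a, rfl⟩ := hy
  rcases lt_trichotomy m m₀ with hm | rfl | hm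
  · exact ⟨m, a, by rw [hrows m hm]⟩
  · have ha := lt_of_betaNums_lt (hlam.1 m) hlt ((uglovIdx_strictMono he m).lt_iff_lt.mp hxy)
    exact ⟨m, a, by rw [hcols a ha]⟩
  · exfalso
    have hcol := lt_add_of_uglovIdx_lt he hxy
    have hk := le_sub_of_le_sub_succ (by positivity) hgap hm
    have hpos : ∀ b < a₀, 0 < lam m₀ b := fun b hb => by
      rw [hcols b hb]
      exact (Nat.zero_le _).trans_lt (hlt.trans_le (hmu hb.le))
    have hsize := hlam.row_zero_add_le_totalSize hm.ne hpos
    have hrow := hlam.1 m (Nat.zero_le a)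
    unfold betaNums at hcol
    omega

lemma IsUglovBar.ptnLexLt_of_mpLexLt {lbar mbar : ℕ → ℕ} (he : 0 < e) (hlam : IsMP lam)
    (hmu : IsMP mu)
    (hgap : ∀ (m : ℕ) (h : m + 1 < l),
      (totalSize lam : ℤ) + e ≤ k ⟨m, Nat.lt_of_succ_lt h⟩ - k ⟨m + 1, h⟩)
    (hlbar : IsUglovBar e l k lam lbar) (hmbar : IsUglovBar e l k mu mbar)
    (h : MPLexLt lam mu) : PtnLexLt lbar mbar := by
  obtain ⟨m₀, hrows, a₀, hcols, hlt⟩ := h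
  have hbl : beads e l k lam = Set.range (betaNums (∑ m, k m) lbar) := hlbar.2.2
  have hbm : beads e l k mu = Set.range (betaNums (∑ m, k m) mbar) := hmbar.2.2
  refine ptnLexLt_of_betaNums_lt (K := ∑ m, k m) <|
    lt_of_mem_range_of_notMem_range (betaNums_strictAnti hlbar.1) (betaNums_strictAnti hmbar.1)
      (x := uglovIdx e l m₀ (betaNums (k m₀) (mu m₀) a₀)) ?_ ?_ ?_
  · rw [← hbm]
    exact ⟨m₀, a₀, rfl⟩
  · rw [← hbl]
    exact uglovIdx_notMem_beads he (hlam.1 m₀) (hmu.1 m₀) hcols hlt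
  · intro b hb
    rw [← hbm]
    exact mem_beads_of_uglovIdx_lt he hlam (hmu.1 m₀) hgap hrows hcols hlt
      (hbl ▸ ⟨b, rfl⟩) hb

end Abacus

theorem uglov_order_implies_lex_general
    (e l : ℕ) (he : 0 < e) (k : Fin l → ℤ)
    (lam mu : MP l) (hlam : IsMP lam) (hmu : IsMP mu)
    -- the multicharge condition k̃_m − k̃_{m+1} ≥ ht(α) + e
    (hgap : ∀ (m : ℕ) (h : m + 1 < l),
      (totalSize lam : ℤ) + e ≤ k ⟨m, Nat.lt_of_succ_lt h⟩ - k ⟨m + 1, h⟩)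
    -- the associated partitions λ̄ and μ̄
    (lbar mbar : ℕ → ℕ)
    (hlbar : IsUglovBar e l k lam lbar) (hmbar : IsUglovBar e l k mu mbar)
    -- μ > λ in Uglov's order
    (hdom : PtnDom mbar lbar) (hne : mu ≠ lam) :
    MPLexLt mu lam :=
  (mpLexLt_or_mpLexLt_of_ne hne).resolve_right fun h =>
    hdom.not_ptnLexLt (hlbar.ptnLexLt_of_mpLexLt he hlam hmu hgap hmbar h)

/-- let `e > 0` and suppose the multicharge satisfies
`k̃_m − k̃_{m+1} ≥ ht(α) + e` for `m = 1,…,l−1`.  Then for all `l`-multipartitions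
`λ, μ` of content `α`, `μ > λ` in Uglov's order (i.e. `μ̄ ⊴ λ̄` in the dominance
order on the partitions associated via the inverse `(l,e)`-quotient map, with
`μ ≠ λ`) implies `μ <_lex λ` in the lexicographic order on multipartitions. -/
theorem uglov_order_implies_lex
    (e l : ℕ) (he : 0 < e) (k : Fin l → ℤ)
    (lam mu : MP l) (hlam : IsMP lam) (hmu : IsMP mu)
    -- λ and μ have the same content α, of height ht(α) = |λ|
    (hsize : totalSize mu = totalSize lam)
    (hcont : ∀ i : ZMod e, resCont e k mu i = resCont e k lam i)
    -- the multicharge condition k̃_m − k̃_{m+1} ≥ ht(α) + e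
    (hgap : ∀ (m : ℕ) (h : m + 1 < l),
      (totalSize lam : ℤ) + e ≤ k ⟨m, Nat.lt_of_succ_lt h⟩ - k ⟨m + 1, h⟩)
    -- the associated partitions λ̄ and μ̄
    (lbar mbar : ℕ → ℕ)
    (hlbar : IsUglovBar e l k lam lbar) (hmbar : IsUglovBar e l k mu mbar)
    -- μ > λ in Uglov's order
    (hdom : PtnDom mbar lbar) (hne : mu ≠ lam) :
    MPLexLt mu lam :=
  uglov_order_implies_lex_general e l he k lam mu hlam hmu hgap lbar mbar hlbar hmbar hdom hne
end

section
/- For any standard λ-tableau T with d = |λ| boxes, the degree statistic satisfies deg(T) + codeg(T) = def(cont(λ)), where def(α) = (Λ,α) − (α,α)/2. -/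
open scoped Classical

/-- A standard tableau with `d` boxes is encoded by the sequence of rows
`boxes 0, …, boxes (d−1)` in which the entries `1, …, d` are successively placed;
`shape boxes r` is the multipartition formed by the first `r` entries. -/
def shape {l : ℕ} (boxes : ℕ → Fin l × ℕ) (r : ℕ) : MP l :=
  fun m a => ((Finset.range r).filter fun s => boxes s = (m, a)).card

/-- Row `(m,a)` of `lam` has an addable node (at column `lam m a`). -/
def RowAddable {l : ℕ} (lam : MP l) (m : Fin l) (a : ℕ) : Prop :=
  a = 0 ∨ lam m a < lam m (a - 1)

/-- Row `(m,a)` of `lam` has a removable node. -/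
def RowRemovable {l : ℕ} (lam : MP l) (m : Fin l) (a : ℕ) : Prop :=
  lam m (a + 1) < lam m a

/-- `boxes` encodes a standard tableau with `d` boxes: at each step the new box is
addable for the shape built so far. -/
def IsStandard {l : ℕ} (d : ℕ) (boxes : ℕ → Fin l × ℕ) : Prop :=
  ∀ r < d, RowAddable (shape boxes r) (boxes r).1 (boxes r).2

/-- The residue of the box containing the entry `r + 1`. -/
def boxRes (e : ℕ) {l : ℕ} (k : Fin l → ℤ) (boxes : ℕ → Fin l × ℕ) (r : ℕ) :
    ZMod e :=
  ((k (boxes r).1 + (shape boxes r (boxes r).1 (boxes r).2 : ℤ) - (boxes r).2 : ℤ) :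
    ZMod e)

/-- Residues of addable/removable nodes of `lam`. -/
def addRes (e : ℕ) {l : ℕ} (k : Fin l → ℤ) (lam : MP l) (m : Fin l) (a : ℕ) :
    ZMod e := ((k m + lam m a - a : ℤ) : ZMod e)

def remRes (e : ℕ) {l : ℕ} (k : Fin l → ℤ) (lam : MP l) (m : Fin l) (a : ℕ) :
    ZMod e := ((k m + (lam m a - 1 : ℕ) - a : ℤ) : ZMod e)

/-- `(m,a)` is row-above `(m',a')`. -/
def rowLt {l : ℕ} (p q : Fin l × ℕ) : Prop :=
  p.1 < q.1 ∨ (p.1 = q.1 ∧ p.2 < q.2)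

/-- `d_A(ν)` for a node `A` in row `p` of residue `i`: addable minus removable
`i`-nodes of `ν` strictly row-below `A`. -/
noncomputable def dBelow (e : ℕ) {l : ℕ} (k : Fin l → ℤ) (nu : MP l)
    (p : Fin l × ℕ) (i : ZMod e) : ℤ :=
  (Set.ncard {x : Fin l × ℕ | rowLt p x ∧ RowAddable nu x.1 x.2 ∧
      addRes e k nu x.1 x.2 = i} : ℤ)
    - (Set.ncard {x : Fin l × ℕ | rowLt p x ∧ RowRemovable nu x.1 x.2 ∧
      remRes e k nu x.1 x.2 = i} : ℤ)

/-- `d^A(μ)` for a node `A` in row `p` of residue `i`: addable minus removable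
`i`-nodes of `μ` strictly row-above `A`. -/
noncomputable def dAbove (e : ℕ) {l : ℕ} (k : Fin l → ℤ) (mu : MP l)
    (p : Fin l × ℕ) (i : ZMod e) : ℤ :=
  (Set.ncard {x : Fin l × ℕ | rowLt x p ∧ RowAddable mu x.1 x.2 ∧
      addRes e k mu x.1 x.2 = i} : ℤ)
    - (Set.ncard {x : Fin l × ℕ | rowLt x p ∧ RowRemovable mu x.1 x.2 ∧
      remRes e k mu x.1 x.2 = i} : ℤ)

/-- `deg(T) = Σ_r d_{A_r}(λ^{(≤r)})`, where `A_r` is the box holding entry `r` and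
`λ^{(≤r)}` is the shape after placing `1, …, r`. -/
noncomputable def degT (e : ℕ) {l : ℕ} (k : Fin l → ℤ) (d : ℕ)
    (boxes : ℕ → Fin l × ℕ) : ℤ :=
  ∑ r ∈ Finset.range d,
    dBelow e k (shape boxes (r + 1)) (boxes r) (boxRes e k boxes r)

/-- `codeg(T) = Σ_r d^{A_r}(λ^{(≤r)} \ A_r)`. -/
noncomputable def codegT (e : ℕ) {l : ℕ} (k : Fin l → ℤ) (d : ℕ)
    (boxes : ℕ → Fin l × ℕ) : ℤ :=
  ∑ r ∈ Finset.range d,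
    dAbove e k (shape boxes r) (boxes r) (boxRes e k boxes r)

/-- The Cartan matrix of type `A_∞` (`e = 0`) or `A_{e−1}^{(1)}` (`e ≥ 2`). -/
def cartan (e : ℕ) (i j : ZMod e) : ℤ :=
  if i = j then 2
  else -(((if j = i + 1 then 1 else 0) + (if j = i - 1 then 1 else 0) : ℤ))

/-!
Write `N_j(ν)` for the number of addable minus removable `j`-nodes of `ν`. Adding an addable
`i`-node `A` to `μ` leaves the `i`-nodes in the rows strictly below `A` unchanged: only the next row
can change status, and its new addable node has residue `i - 1 ≠ i`. As the row of `A` contributes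
exactly `A` to `N_i(μ)`, this gives `d_A(μ ∪ A) + d^A(μ) = N_i(μ) - 1`. On the other hand `N_j(ν) =
(Λ - cont ν, α_j)`: in each component, `N_j` plus the Cartan pairing of the boxes of a row with
`α_j` telescopes down the rows to `[k_m ≡ j]`. Summing over the boxes `A_1, …, A_d` of `T` gives
`Σ_r ((Λ, α_{i_r}) - Σ_{s<r} a_{i_s i_r} - 1) = (Λ, α) - (α, α)/2`, as `a_{ii} = 2` and the Cartan
matrix is symmetric.
-/

open Finset

section Cartan

variable {e : ℕ}

lemma add_one_ne_self_of_ne_one (he : e ≠ 1) (i : ZMod e) : i + 1 ≠ i := by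
  simpa [ZMod.one_eq_zero_iff] using he

lemma sub_one_ne_self_of_ne_one (he : e ≠ 1) (i : ZMod e) : i - 1 ≠ i := by
  simpa [sub_eq_self, ZMod.one_eq_zero_iff] using he

def resInd (e : ℕ) (j : ZMod e) (x : ℤ) : ℤ := if (x : ZMod e) = j then 1 else 0

lemma cartan_self (i : ZMod e) : cartan e i i = 2 := if_pos rfl

lemma cartan_comm (i j : ZMod e) : cartan e i j = cartan e j i := by
  have h1 : j = i + 1 ↔ i = j - 1 := by rw [eq_sub_iff_add_eq, eq_comm]
  have h2 : j = i - 1 ↔ i = j + 1 := by rw [eq_sub_iff_add_eq, eq_comm]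
  unfold cartan
  simp only [h1, h2, eq_comm (a := i), add_comm]

lemma cartan_intCast_eq (he : e ≠ 1) (x : ℤ) (j : ZMod e) :
    cartan e x j = 2 * resInd e j x - resInd e j (x + 1) - resInd e j (x - 1) := by
  have h1 := add_one_ne_self_of_ne_one he (x : ZMod e)
  have h2 := sub_one_ne_self_of_ne_one he (x : ZMod e)
  unfold cartan resInd
  push_cast
  by_cases hx : (x : ZMod e) = j
  · subst hx; simp [h1, h2]
  · simp only [if_neg hx, eq_comm (a := j)]
    split_ifs <;> ring

lemma sum_range_cartan_intCast (he : e ≠ 1) (κ : ℤ) (n : ℕ) (j : ZMod e) :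
    ∑ c ∈ range n, cartan e ((κ + c : ℤ) : ZMod e) j
      = resInd e j κ - resInd e j (κ - 1) - (resInd e j (κ + n) - resInd e j (κ + n - 1)) := by
  have htel := sum_range_sub' (fun c : ℕ => resInd e j (κ + c) - resInd e j (κ + c - 1)) n
  simp only [Nat.cast_add, Nat.cast_one, CharP.cast_eq_zero, add_zero] at htel
  rw [← htel]
  refine sum_congr rfl fun c _ => ?_
  rw [cartan_intCast_eq he, ← add_assoc, add_sub_cancel_right]
  ring

end Cartan

lemma sum_range_sum_range_of_symm (f : ℕ → ℕ → ℤ) (hf : ∀ r s, f r s = f s r) (d : ℕ) :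
    ∑ r ∈ range d, ∑ s ∈ range d, f r s = ∑ r ∈ range d, (f r r + 2 * ∑ s ∈ range r, f s r) := by
  induction d with
  | zero => simp
  | succ d ih =>
    simp only [sum_range_succ, sum_add_distrib, ih, hf d]
    ring

section Multipartition

variable {l : ℕ}

def addBox (μ : MP l) (p : Fin l × ℕ) : MP l := fun m a => μ m a + if p = (m, a) then 1 else 0

lemma addBox_apply_of_ne {μ : MP l} {p : Fin l × ℕ} {m : Fin l} {a : ℕ} (h : p ≠ (m, a)) :
    addBox μ p m a = μ m a := by
  simp [addBox, h]

lemma shape_zero_apply (boxes : ℕ → Fin l × ℕ) (m : Fin l) (a : ℕ) : shape boxes 0 m a = 0 := by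
  simp [shape]

lemma shape_succ (boxes : ℕ → Fin l × ℕ) (r : ℕ) :
    shape boxes (r + 1) = addBox (shape boxes r) (boxes r) := by
  funext m a
  simp only [shape, addBox, range_add_one, filter_insert]
  split_ifs with h
  · rw [card_insert_of_notMem (by simp)]
  · rfl

lemma antitone_addBox {μ : MP l} (hμ : ∀ m, Antitone (μ m)) {m : Fin l} {a : ℕ}
    (hA : RowAddable μ m a) (m' : Fin l) : Antitone (addBox μ (m, a) m') := by
  refine antitone_nat_of_succ_le fun b => ?_
  have hb : μ m' (b + 1) ≤ μ m' b := hμ m' b.le_succ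
  simp only [addBox, Prod.mk.injEq]
  split_ifs with h₁ h₂ <;> try omega
  obtain ⟨rfl, rfl⟩ := h₁
  rcases hA with h | h
  · omega
  · simpa using h

lemma antitone_shape {d : ℕ} {boxes : ℕ → Fin l × ℕ} (hstd : IsStandard d boxes) {r : ℕ}
    (hr : r ≤ d) (m : Fin l) : Antitone (shape boxes r m) := by
  induction r generalizing m with
  | zero => intro a b _; simp [shape_zero_apply]
  | succ r ih =>
    rw [shape_succ]
    exact antitone_addBox (ih (by omega)) (hstd r (by omega)) m

lemma shape_apply_eq_zero {boxes : ℕ → Fin l × ℕ} {r B : ℕ} (hB : ∀ s < r, (boxes s).2 < B)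
    {m : Fin l} {a : ℕ} (ha : B ≤ a) : shape boxes r m a = 0 := by
  simp only [shape, card_eq_zero, filter_eq_empty_iff, mem_range]
  intro s hs h
  have := hB s hs
  simp [h] at this
  omega

lemma rowLt_iff_toLex_lt {p q : Fin l × ℕ} : rowLt p q ↔ toLex p < toLex q :=
  Prod.Lex.toLex_lt_toLex.symm

noncomputable def rowBalance (e : ℕ) (k : Fin l → ℤ) (ν : MP l) (j : ZMod e)
    (x : Fin l × ℕ) : ℤ :=
  (if RowAddable ν x.1 x.2 ∧ addRes e k ν x.1 x.2 = j then 1 else 0)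
    - (if RowRemovable ν x.1 x.2 ∧ remRes e k ν x.1 x.2 = j then 1 else 0)

lemma lt_add_one_of_rowAddable {ν : MP l} {B : ℕ} (hB : ∀ m a, B ≤ a → ν m a = 0)
    {m : Fin l} {a : ℕ} (h : RowAddable ν m a) : a < B + 1 := by
  by_contra! ha
  rcases h with h | h
  · omega
  · rw [hB m a (by omega), hB m (a - 1) (by omega)] at h
    exact lt_irrefl 0 h

lemma lt_add_one_of_rowRemovable {ν : MP l} {B : ℕ} (hB : ∀ m a, B ≤ a → ν m a = 0)
    {m : Fin l} {a : ℕ} (h : RowRemovable ν m a) : a < B + 1 := by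
  by_contra! ha
  unfold RowRemovable at h
  rw [hB m a (by omega)] at h
  exact Nat.not_lt_zero _ h

lemma ncard_sub_ncard_eq_sum_rowBalance {e : ℕ} (k : Fin l → ℤ) {ν : MP l} {B : ℕ}
    (hB : ∀ m a, B ≤ a → ν m a = 0) (P : Fin l × ℕ → Prop) (j : ZMod e) :
    (Set.ncard {x | P x ∧ RowAddable ν x.1 x.2 ∧ addRes e k ν x.1 x.2 = j} : ℤ)
      - Set.ncard {x | P x ∧ RowRemovable ν x.1 x.2 ∧ remRes e k ν x.1 x.2 = j}
      = ∑ x ∈ univ ×ˢ range (B + 1) with P x, rowBalance e k ν j x := by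
  have ncard_eq {Q : Fin l × ℕ → Prop} (hQ : ∀ x, Q x → x.2 < B + 1) :
      Set.ncard {x | Q x} = #{x ∈ univ ×ˢ range (B + 1) | Q x} := by
    rw [← Set.ncard_coe_finset]
    congr 1
    ext x
    simpa using fun h => hQ x h
  rw [ncard_eq fun x h => lt_add_one_of_rowAddable hB h.2.1,
    ncard_eq fun x h => lt_add_one_of_rowRemovable hB h.2.1]
  simp only [rowBalance, sum_sub_distrib, sum_boole, filter_filter]
  congr!

end Multipartition

section Tableau

variable {l e : ℕ} (k : Fin l → ℤ)

/-- `[k_m - a ≡ j]` comes from the Cartan pairing of the boxes of row `a`; the second term pairs a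
non-addable row end with the non-removable end of the row above it. -/
noncomputable def rowPotential (ν : MP l) (j : ZMod e) (m : Fin l) (a : ℕ) : ℤ :=
  resInd e j (k m - a) - if RowAddable ν m a then 0 else resInd e j (k m + ν m a - a)

lemma rowBalance_add_sum_cartan (he : e ≠ 1) {ν : MP l} {m : Fin l} (hν : Antitone (ν m))
    (j : ZMod e) (a : ℕ) :
    rowBalance e k ν j (m, a) + ∑ c ∈ range (ν m a), cartan e ((k m + c - a : ℤ) : ZMod e) j
      = rowPotential k ν j m a - rowPotential k ν j m (a + 1) := by
  have hadd : (if RowAddable ν m a ∧ addRes e k ν m a = j then (1 : ℤ) else 0)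
      = resInd e j (k m + ν m a - a)
        - if RowAddable ν m a then 0 else resInd e j (k m + ν m a - a) := by
    by_cases h : RowAddable ν m a <;> simp [h, resInd, addRes]
  have hrem : (if RowRemovable ν m a ∧ remRes e k ν m a = j then (1 : ℤ) else 0)
      = resInd e j (k m + ν m a - a - 1)
        - if RowAddable ν m (a + 1) then 0
          else resInd e j (k m + ν m (a + 1) - (a + 1 : ℕ)) := by
    by_cases h : RowRemovable ν m a
    · have h' : RowAddable ν m (a + 1) := Or.inr (by simpa [RowRemovable] using h)
      have hpos : 1 ≤ ν m a := by unfold RowRemovable at h; omega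
      simp only [h, h', true_and, if_true, sub_zero, resInd, remRes]
      push_cast [Nat.cast_sub hpos]
      ring_nf
    · have heq : ν m (a + 1) = ν m a := le_antisymm (hν a.le_succ) (not_lt.mp h)
      have h' : ¬ RowAddable ν m (a + 1) := by simp [RowAddable, heq]
      simp only [h, h', false_and, if_false, heq]
      push_cast
      ring_nf
  have hcont := sum_range_cartan_intCast he (k m - a) (ν m a) j
  simp only [add_sub_right_comm (k m)] at hcont ⊢
  unfold rowBalance rowPotential
  rw [hadd, hrem, hcont]
  push_cast
  ring_nf

lemma sum_rowBalance_eq (he : e ≠ 1) {ν : MP l} (hν : ∀ m, Antitone (ν m)) {B : ℕ}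
    (hB : ∀ m a, B ≤ a → ν m a = 0) (j : ZMod e) :
    ∑ x ∈ univ ×ˢ range (B + 1), rowBalance e k ν j x
      = #{m | (k m : ZMod e) = j}
        - ∑ x ∈ univ ×ˢ range (B + 1), ∑ c ∈ range (ν x.1 x.2),
            cartan e ((k x.1 + c - x.2 : ℤ) : ZMod e) j := by
  rw [eq_sub_iff_add_eq, ← sum_add_distrib, sum_product, natCast_card_filter]
  refine sum_congr rfl fun m _ => ?_
  rw [sum_congr rfl fun a _ => rowBalance_add_sum_cartan k he (hν m) j a, sum_range_sub']
  have h₀ : rowPotential k ν j m 0 = resInd e j (k m) := by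
    simp [rowPotential, RowAddable]
  have h₁ : rowPotential k ν j m (B + 1) = 0 := by
    have hB₁ := hB m (B + 1) (by omega)
    have hB₀ := hB m B le_rfl
    simp [rowPotential, RowAddable, hB₁, hB₀]
  rw [h₀, h₁, sub_zero]
  rfl

lemma sum_range_boxRes_eq_sum_rows (f : ZMod e → ℤ) (boxes : ℕ → Fin l × ℕ) {r : ℕ}
    {T : Finset (Fin l × ℕ)} (hT : ∀ s < r, boxes s ∈ T) :
    ∑ s ∈ range r, f (boxRes e k boxes s)
      = ∑ x ∈ T, ∑ c ∈ range (shape boxes r x.1 x.2), f ((k x.1 + c - x.2 : ℤ) : ZMod e) := by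
  induction r with
  | zero => simp [shape_zero_apply]
  | succ r ih =>
    have hrow (x : Fin l × ℕ) :
        ∑ c ∈ range (shape boxes (r + 1) x.1 x.2), f ((k x.1 + c - x.2 : ℤ) : ZMod e)
          = ∑ c ∈ range (shape boxes r x.1 x.2), f ((k x.1 + c - x.2 : ℤ) : ZMod e)
            + if boxes r = x then f (boxRes e k boxes r) else 0 := by
      rw [shape_succ]
      by_cases h : boxes r = x
      · subst h
        simp [addBox, sum_range_succ, boxRes]
      · simp [addBox, h]
    rw [sum_range_succ, ih fun s hs => hT s (by omega), sum_congr rfl fun x _ => hrow x,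
      sum_add_distrib, sum_ite_eq, if_pos (hT r (by omega))]

lemma rowBalance_congr {ν μ : MP l} {x : Fin l × ℕ} (j : ZMod e)
    (h₁ : ν x.1 (x.2 - 1) = μ x.1 (x.2 - 1)) (h₂ : ν x.1 x.2 = μ x.1 x.2)
    (h₃ : ν x.1 (x.2 + 1) = μ x.1 (x.2 + 1)) : rowBalance e k ν j x = rowBalance e k μ j x := by
  unfold rowBalance RowAddable RowRemovable addRes remRes
  rw [h₁, h₂, h₃]

lemma rowBalance_self_of_rowAddable (he : e ≠ 1) {μ : MP l} {m : Fin l} {a : ℕ}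
    (hA : RowAddable μ m a) : rowBalance e k μ (addRes e k μ m a) (m, a) = 1 := by
  have hres (hR : RowRemovable μ m a) : remRes e k μ m a = addRes e k μ m a - 1 := by
    have hpos : 1 ≤ μ m a := by unfold RowRemovable at hR; omega
    unfold remRes addRes
    push_cast [Nat.cast_sub hpos]
    ring
  have hnot : ¬ (RowRemovable μ m a ∧ remRes e k μ m a = addRes e k μ m a) :=
    fun ⟨hR, h⟩ => sub_one_ne_self_of_ne_one he _ ((hres hR).symm.trans h)
  simp [rowBalance, hA, hnot]

lemma rowBalance_addBox_of_rowLt (he : e ≠ 1) {μ : MP l} {m : Fin l} {a : ℕ}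
    (hμ : μ m (a + 1) ≤ μ m a) {x : Fin l × ℕ} (hx : rowLt (m, a) x) :
    rowBalance e k (addBox μ (m, a)) (addRes e k μ m a) x
      = rowBalance e k μ (addRes e k μ m a) x := by
  by_cases hx' : x = (m, a + 1)
  · subst hx'
    have h₀ : addBox μ (m, a) m a = μ m a + 1 := by simp [addBox]
    have h₁ : addBox μ (m, a) m (a + 1) = μ m (a + 1) := addBox_apply_of_ne (by simp)
    have h₂ : addBox μ (m, a) m (a + 1 + 1) = μ m (a + 1 + 1) :=
      addBox_apply_of_ne (by simp only [ne_eq, Prod.mk.injEq, true_and]; omega)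
    unfold rowBalance RowAddable RowRemovable addRes remRes
    simp only [h₀, h₁, h₂, Nat.add_sub_cancel, add_eq_zero, one_ne_zero, and_false, false_or]
    rcases hμ.lt_or_eq with hlt | heq
    · simp [hlt, Nat.lt_succ_of_lt hlt]
    · simp [heq, ZMod.one_eq_zero_iff, he]
  · obtain ⟨m', a'⟩ := x
    have hrow (b : ℕ) (hb : a' ≤ b + 1) : addBox μ (m, a) m' b = μ m' b := by
      refine addBox_apply_of_ne fun h => ?_
      obtain ⟨rfl, rfl⟩ := Prod.mk.inj h
      simp only [rowLt, lt_irrefl, true_and, false_or] at hx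
      simp only [Prod.mk.injEq, true_and] at hx'
      omega
    exact rowBalance_congr k _ (hrow _ (by omega)) (hrow _ (by omega)) (hrow _ (by omega))

lemma sum_eq_sum_rowLt_add_add_sum_rowLt {M : Type*} [AddCommMonoid M]
    {T : Finset (Fin l × ℕ)} {p : Fin l × ℕ} (hp : p ∈ T) (f : Fin l × ℕ → M) :
    ∑ x ∈ T, f x = ∑ x ∈ T with rowLt x p, f x + (f p + ∑ x ∈ T with rowLt p x, f x) := by
  have hcompl : {x ∈ T | ¬ rowLt x p} = insert p {x ∈ T | rowLt p x} := by
    ext x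
    simp only [mem_filter, mem_insert, rowLt_iff_toLex_lt, not_lt, le_iff_eq_or_lt,
      toLex_inj]
    constructor
    · rintro ⟨hx, rfl | h⟩ <;> simp [*]
    · rintro (rfl | ⟨hx, h⟩) <;> simp [*]
  rw [← sum_filter_add_sum_filter_not T (rowLt · p), hcompl,
    sum_insert (by simp [rowLt_iff_toLex_lt])]

lemma dBelow_addBox_add_dAbove (he : e ≠ 1) {μ : MP l} (hμ : ∀ m, Antitone (μ m)) {B : ℕ}
    (hB : ∀ m a, B ≤ a → μ m a = 0) {p : Fin l × ℕ} (hA : RowAddable μ p.1 p.2) (hp : p.2 < B) :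
    dBelow e k (addBox μ p) p (addRes e k μ p.1 p.2)
        + dAbove e k μ p (addRes e k μ p.1 p.2)
      = ∑ x ∈ univ ×ˢ range (B + 1), rowBalance e k μ (addRes e k μ p.1 p.2) x - 1 := by
  obtain ⟨m, a⟩ := p
  have hBν (m' : Fin l) (a' : ℕ) (ha' : B ≤ a') : addBox μ (m, a) m' a' = 0 := by
    rw [addBox_apply_of_ne (by simp only [ne_eq, Prod.mk.injEq]; omega), hB m' a' ha']
  have hmem : (m, a) ∈ univ ×ˢ range (B + 1) := by
    simp only [mem_product, mem_univ, mem_range, true_and]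
    omega
  rw [dBelow, ncard_sub_ncard_eq_sum_rowBalance k hBν, dAbove,
    ncard_sub_ncard_eq_sum_rowBalance k hB,
    sum_congr rfl fun x hx =>
      rowBalance_addBox_of_rowLt k he (hμ m a.le_succ) (mem_filter.1 hx).2,
    sum_eq_sum_rowLt_add_add_sum_rowLt hmem, rowBalance_self_of_rowAddable k he hA]
  ring

lemma dBelow_shape_succ_add_dAbove_shape (he : e ≠ 1) {d B : ℕ} {boxes : ℕ → Fin l × ℕ}
    (hstd : IsStandard d boxes) (hB : ∀ s < d, (boxes s).2 < B) {r : ℕ} (hr : r < d) :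
    dBelow e k (shape boxes (r + 1)) (boxes r) (boxRes e k boxes r)
        + dAbove e k (shape boxes r) (boxes r) (boxRes e k boxes r)
      = #{m | (k m : ZMod e) = boxRes e k boxes r}
        - (1 + ∑ s ∈ range r, cartan e (boxRes e k boxes s) (boxRes e k boxes r)) := by
  have hzero (m : Fin l) (a : ℕ) (ha : B ≤ a) : shape boxes r m a = 0 :=
    shape_apply_eq_zero (fun s hs => hB s (by omega)) ha
  have hT (s : ℕ) (hs : s < r) : boxes s ∈ univ ×ˢ range (B + 1) := by
    simpa using (hB s (by omega)).trans B.lt_succ_self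
  set i := boxRes e k boxes r
  have hi : i = addRes e k (shape boxes r) (boxes r).1 (boxes r).2 := rfl
  rw [shape_succ, hi, dBelow_addBox_add_dAbove k he (antitone_shape hstd hr.le) hzero
      (hstd r hr) (hB r hr), ← hi, sum_rowBalance_eq k he (antitone_shape hstd hr.le) hzero,
    ← sum_range_boxRes_eq_sum_rows k (cartan e · i) boxes hT]
  ring

end Tableau

/-- `(Λ, cont λ)` is encoded as `Σ_r #{m | k_m ≡ res A_r}` and `(cont λ, cont λ)` as
`Σ_{r,s} a_{res A_r, res A_s}`, where `A_1, …, A_d` are the boxes of `T`. -/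
theorem deg_add_codeg_eq_defect
    (e l : ℕ) (he : e ≠ 1) (k : Fin l → ℤ) (d : ℕ) (boxes : ℕ → Fin l × ℕ)
    (hstd : IsStandard d boxes) :
    degT e k d boxes + codegT e k d boxes
      = (∑ r ∈ Finset.range d,
          ((Finset.univ.filter fun m : Fin l =>
            ((k m : ZMod e) = boxRes e k boxes r)).card : ℤ))
        - (∑ r ∈ Finset.range d, ∑ s ∈ Finset.range d,
            cartan e (boxRes e k boxes r) (boxRes e k boxes s)) / 2 := by
  obtain ⟨B, hB⟩ : ∃ B, ∀ s < d, (boxes s).2 < B :=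
    ⟨(range d).sup (fun s => (boxes s).2) + 1,
      fun s hs => Nat.lt_succ_of_le (le_sup (f := fun s => (boxes s).2) (mem_range.2 hs))⟩
  rw [degT, codegT, ← sum_add_distrib,
    sum_congr rfl fun r hr => dBelow_shape_succ_add_dAbove_shape k he hstd hB (mem_range.1 hr),
    sum_range_sum_range_of_symm _ fun r s => cartan_comm _ _]
  simp only [cartan_self, ← mul_one_add, ← mul_sum]
  rw [Int.mul_ediv_cancel_left _ two_ne_zero, ← sum_sub_distrib]
end

section
/- Let λ, μ be multipartitions of the same content α, represented on an l-runner abacus via a multicharge with k̃_m − k̃_{m+1} ≥ ht(α) + e for all m. If μ >_lex λ (lexicographically on the sequence of component partitions), then μ̄ >_lex λ̄, where λ̄ denotes the partition obtained by reading the combined abacus (rows interleaved by the Uglov indexing els + e(m−1) + t for position n = es + t, 1 ≤ t ≤ e). -/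
/-!
Let `(m, a)` be the first row in which `μ` exceeds `λ`, and let `u` be the Uglov index of the
bead of `A(μ)` in runner `m`, column `k̃_m + μ^{(m)}_a − a`. This position is empty in `A(λ)`,
and every bead of `A(λ)` missing from `A(μ)` has index below `u`: on the earlier runners, and on
runner `m` in the rows before `a`, the two displays agree; the other beads of runner `m` lie to
the left of `u`; and on the later runners the charge gap `ht(α) + e` puts every bead at least
`e` columns to the left, hence into an earlier block of `e·l` consecutive indices. For two
partitions, the largest beta number at which their beta sets differ belongs to the one that is
larger in the lexicographic order.
-/

open scoped Classical

section Uglov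

variable {e l : ℕ}

lemma uglovIdx_sub_one_ediv_emod (he : 0 < e) (m : Fin l) (n : ℤ) :
    (uglovIdx e l m n - 1) / (e * l) = (n - 1) / e ∧
      (uglovIdx e l m n - 1) % (e * l) = e * m + (n - 1) % e := by
  have he' : (0 : ℤ) < e := by exact_mod_cast he
  have hr₀ := Int.emod_nonneg (n - 1) he'.ne'
  have hr₁ := Int.emod_lt_of_pos (n - 1) he'
  have hm : (m : ℤ) + 1 ≤ l := by exact_mod_cast m.2
  have hml : (e : ℤ) * (m + 1) ≤ e * l := mul_le_mul_of_nonneg_left hm he'.le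
  refine (Int.ediv_emod_unique (by nlinarith)).2 ⟨?_, by positivity, by nlinarith⟩
  unfold uglovIdx
  ring

lemma uglovIdx_lt_of_ediv_lt (he : 0 < e) (m₀ m : Fin l) {n₀ n : ℤ}
    (h : (n₀ - 1) / e < (n - 1) / e) : uglovIdx e l m₀ n₀ < uglovIdx e l m n := by
  have hl : (0 : ℤ) < e * l := by have := m.pos; positivity
  rw [← (uglovIdx_sub_one_ediv_emod he m₀ n₀).1, ← (uglovIdx_sub_one_ediv_emod he m n).1] at h
  by_contra! hle
  exact (Int.ediv_le_ediv hl (by linarith : uglovIdx e l m n - 1 ≤ uglovIdx e l m₀ n₀ - 1)).not_gt h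

lemma uglovIdx_lt_of_add_le (he : 0 < e) (m₀ m : Fin l) {n₀ n : ℤ} (h : n₀ + e ≤ n) :
    uglovIdx e l m₀ n₀ < uglovIdx e l m n := by
  have he' : (0 : ℤ) < e := by exact_mod_cast he
  refine uglovIdx_lt_of_ediv_lt he m₀ m ?_
  calc (n₀ - 1) / e < (n₀ - 1) / e + 1 := lt_add_one _
    _ = (n₀ - 1 + 1 * e) / e := (Int.add_mul_ediv_right _ _ he'.ne').symm
    _ ≤ (n - 1) / e := Int.ediv_le_ediv he' (by linarith)

end Uglov

section BetaNumbers

variable {f g : ℕ → ℕ}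

lemma betaNum_strictAnti (hf : Antitone f) (S : ℤ) : StrictAnti fun b : ℕ => S + f b - b :=
  strictAnti_nat_of_succ_lt fun b => by have := hf (Nat.le_add_right b 1); push_cast; omega

lemma betaNum_not_mem_of_lt (hf : Antitone f) (hg : Antitone g) {a : ℕ}
    (hagree : ∀ b < a, f b = g b) (hlt : f a < g a) (S : ℤ) :
    S + g a - a ∉ Set.range fun b : ℕ => S + f b - b := by
  rintro ⟨b, hb⟩
  simp only at hb
  rcases lt_or_ge b a with hba | hab
  · rw [hagree b hba] at hb
    exact hba.ne ((betaNum_strictAnti hg S).injective hb)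
  · have := hf hab
    omega

lemma ptnLexLt_of_forall_betaNum_le (hf : Antitone f) (hg : Antitone g) {S u : ℤ}
    (hug : u ∈ Set.range fun b : ℕ => S + g b - b)
    (huf : u ∉ Set.range fun b : ℕ => S + f b - b)
    (hmax : ∀ v ∈ Set.range (fun b : ℕ => S + f b - b),
      v ∉ Set.range (fun b : ℕ => S + g b - b) → v ≤ u) :
    PtnLexLt f g := by
  obtain ⟨b₀, rfl⟩ := hug
  have hdiff : ∃ b, f b ≠ g b := by
    by_contra! h
    exact huf ⟨b₀, by simp only [h]⟩
  obtain ⟨a, hne, hagree⟩ : ∃ a, f a ≠ g a ∧ ∀ b < a, f b = g b :=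
    ⟨Nat.find hdiff, Nat.find_spec hdiff, fun b hb => not_ne_iff.mp (Nat.find_min hdiff hb)⟩
  refine ⟨a, hagree, (Nat.le_of_not_lt fun hlt => ?_).lt_of_ne hne⟩
  have hab₀ : a ≤ b₀ := by
    by_contra! h
    exact huf ⟨b₀, by simp only [hagree b₀ h]⟩
  have hle : S + f a - a ≤ S + g b₀ - b₀ :=
    hmax _ ⟨a, rfl⟩ (betaNum_not_mem_of_lt hg hf (fun b hb => (hagree b hb).symm) hlt S)
  have := hg hab₀
  omega

end BetaNumbers

section Abacus

variable {l : ℕ}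

lemma add_le_totalSize {nu : MP l} (hnu : ∃ N, ∀ m a, N ≤ a → nu m a = 0) {m m' : Fin l}
    (hmm : m ≠ m') {a : ℕ} (ha : ∀ b < a, 1 ≤ nu m b) (c : ℕ) : a + nu m' c ≤ totalSize nu := by
  obtain ⟨N, hN⟩ := hnu
  set M := max N (max a (c + 1))
  have hrow : ∀ m₀, ∑ᶠ b, nu m₀ b = ∑ b ∈ Finset.range M, nu m₀ b := fun m₀ =>
    finsum_eq_sum_of_support_subset _ fun b hb => by
      by_contra hbM
      simp only [Finset.coe_range, Set.mem_Iio, not_lt] at hbM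
      exact hb (hN m₀ b (le_of_max_le_left hbM))
  have hfirst : a ≤ ∑ b ∈ Finset.range M, nu m b :=
    calc a = ∑ _b ∈ Finset.range a, 1 := by simp
      _ ≤ ∑ b ∈ Finset.range a, nu m b := Finset.sum_le_sum fun b hb => ha b (Finset.mem_range.1 hb)
      _ ≤ ∑ b ∈ Finset.range M, nu m b :=
        Finset.sum_le_sum_of_subset (Finset.range_subset_range.2 (by omega))
  calc a + nu m' c ≤ ∑ b ∈ Finset.range M, nu m b + ∑ b ∈ Finset.range M, nu m' b :=
        add_le_add hfirst (Finset.single_le_sum (fun _ _ => Nat.zero_le _)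
          (Finset.mem_range.2 (by omega)))
    _ = ∑ m₀ ∈ {m, m'}, ∑ᶠ b, nu m₀ b := by rw [Finset.sum_pair hmm, hrow, hrow]
    _ ≤ ∑ m₀, ∑ᶠ b, nu m₀ b := Finset.sum_le_sum_of_subset (Finset.subset_univ _)
    _ = totalSize nu := (finsum_eq_sum_of_fintype _).symm

lemma gap_le_sub_of_lt {k : Fin l → ℤ} {d : ℤ} (hd : 0 ≤ d)
    (hgap : ∀ (m : ℕ) (h : m + 1 < l), d ≤ k ⟨m, Nat.lt_of_succ_lt h⟩ - k ⟨m + 1, h⟩)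
    {m m' : Fin l} (h : m < m') : d ≤ k m - k m' := by
  obtain ⟨j, hj⟩ := m'
  induction j, Nat.succ_le_of_lt (show m.1 < j from h) using Nat.le_induction with
  | base => exact hgap m.1 hj
  | succ j hmj ih =>
    have := ih (by omega) (show m.1 < j by omega)
    have := hgap j hj
    linarith

variable {e : ℕ} {k : Fin l → ℤ} {lam mu : MP l}

lemma uglovIdx_not_mem_beads (he : 0 < e) (hlam : ∀ m, Antitone (lam m))
    (hmu : ∀ m, Antitone (mu m)) {m : Fin l} {a : ℕ} (hagree : ∀ b < a, lam m b = mu m b)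
    (hlt : lam m a < mu m a) : uglovIdx e l m (k m + mu m a - a) ∉ beads e l k lam := by
  rintro ⟨m₀, b, hb⟩
  obtain ⟨rfl, hcol⟩ := (uglovIdx_inj he).1 hb
  exact betaNum_not_mem_of_lt (hlam m) (hmu m) hagree hlt (k m) ⟨b, hcol.symm⟩

lemma le_uglovIdx_of_mem_beads (he : 0 < e) (hlam : IsMP lam) (hmu : ∀ m, Antitone (mu m))
    (hgap : ∀ (m : ℕ) (h : m + 1 < l),
      (totalSize lam : ℤ) + e ≤ k ⟨m, Nat.lt_of_succ_lt h⟩ - k ⟨m + 1, h⟩)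
    {m : Fin l} (hcomp : ∀ m' < m, lam m' = mu m') {a : ℕ} (hagree : ∀ b < a, lam m b = mu m b)
    (hlt : lam m a < mu m a) :
    ∀ v ∈ beads e l k lam, v ∉ beads e l k mu → v ≤ uglovIdx e l m (k m + mu m a - a) := by
  rintro v ⟨m₀, b, rfl⟩ hv
  rcases lt_trichotomy m₀ m with hm₀ | rfl | hm₀
  · exact absurd ⟨m₀, b, by rw [hcomp m₀ hm₀]⟩ hv
  · rcases lt_or_ge b a with hba | hab
    · exact absurd ⟨m₀, b, by rw [hagree b hba]⟩ hv
    · refine (uglovIdx_strictMono he m₀).monotone ?_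
      have := hlam.1 m₀ hab
      omega
  · refine (uglovIdx_lt_of_add_le he m₀ m ?_).le
    have hrows : ∀ b < a, 1 ≤ lam m b := fun b hb => by
      have := hmu m hb.le
      rw [hagree b hb]
      omega
    have hsize := add_le_totalSize hlam.2 hm₀.ne hrows b
    have hk := gap_le_sub_of_lt (by positivity) hgap hm₀
    omega

end Abacus

theorem lex_implies_bar_lex_general
    (e : ℕ) (l : ℕ) (he : 2 ≤ e) (k : Fin l → ℤ)
    (lam mu : MP l) (hlam : IsMP lam) (hmu : IsMP mu)
    -- the multicharge condition k̃_m − k̃_{m+1} ≥ ht(α) + e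
    (hgap : ∀ (m : ℕ) (h : m + 1 < l),
      (totalSize lam : ℤ) + e ≤ k ⟨m, Nat.lt_of_succ_lt h⟩ - k ⟨m + 1, h⟩)
    -- the associated partitions λ̄ and μ̄
    (lbar mbar : ℕ → ℕ)
    (hlbar : IsUglovBar e l k lam lbar) (hmbar : IsUglovBar e l k mu mbar)
    -- μ >_lex λ
    (hlex : MPLexLt lam mu) :
    PtnLexLt lbar mbar := by
  obtain ⟨m, hcomp, a, hagree, hlt⟩ := hlex
  have he' : 0 < e := by omega
  obtain ⟨hlbar_anti, -, hlbar_beads⟩ := hlbar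
  obtain ⟨hmbar_anti, -, hmbar_beads⟩ := hmbar
  have hmem : uglovIdx e l m (k m + mu m a - a) ∈ beads e l k mu := ⟨m, a, rfl⟩
  have hnot := uglovIdx_not_mem_beads (k := k) he' hlam.1 hmu.1 hagree hlt
  have hmax := le_uglovIdx_of_mem_beads he' hlam hmu.1 hgap hcomp hagree hlt
  rw [hlbar_beads, hmbar_beads] at *
  exact ptnLexLt_of_forall_betaNum_le hlbar_anti hmbar_anti hmem hnot hmax

/-- let `λ, μ` be `l`-multipartitions of the same content `α`,
represented on an `l`-runner abacus via a multicharge with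
`k̃_m − k̃_{m+1} ≥ ht(α) + e` for all `m`.  If `μ >_lex λ` (lexicographically on
the sequence of component partitions), then `μ̄ >_lex λ̄`, where `λ̄` denotes the
partition obtained by reading the combined abacus under Uglov's reindexing. -/
theorem lex_implies_bar_lex
    (e : ℕ) (l : ℕ) (he : 2 ≤ e) (k : Fin l → ℤ)
    (lam mu : MP l) (hlam : IsMP lam) (hmu : IsMP mu)
    -- λ and μ have the same content α, of height ht(α) = |λ|
    (hsize : totalSize mu = totalSize lam)
    (hcont : ∀ i : ZMod e, resCont e k mu i = resCont e k lam i)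
    -- the multicharge condition k̃_m − k̃_{m+1} ≥ ht(α) + e
    (hgap : ∀ (m : ℕ) (h : m + 1 < l),
      (totalSize lam : ℤ) + e ≤ k ⟨m, Nat.lt_of_succ_lt h⟩ - k ⟨m + 1, h⟩)
    -- the associated partitions λ̄ and μ̄
    (lbar mbar : ℕ → ℕ)
    (hlbar : IsUglovBar e l k lam lbar) (hmbar : IsUglovBar e l k mu mbar)
    -- μ >_lex λ
    (hlex : MPLexLt lam mu) :
    PtnLexLt lbar mbar :=
  lex_implies_bar_lex_general e l he k lam mu hlam hmu hgap lbar mbar hlbar hmbar hlex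
end
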